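/- For any elements x, y, z of a Cayley-Dickson loop Q_n, the associator [x,y,z] defined by (xy)z = (x(yz))·[x,y,z] equals 1 or -1. -/

import Mathlib

/-- The underlying set of the Cayley-Dickson loop `Q n`:
`Q 0 = {±1}` (encoded as `Bool`, `false = 1`, `true = -1`) and `Q (n+1) = Q n × Bool`,
an element `(x, b)` encoding `(x, 0)` if `b = false` and `(x, 1)` if `b = true`. -/
def Q : ℕ → Type
  | 0 => Bool
  | n+1 => Q n × Bool

namespace Q

def one : ∀ n, Q n
  | 0 => false
  | n+1 => (one n, false)

def neg : ∀ n, Q n → Q n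
  | 0, x => !x
  | n+1, (x, b) => (neg n x, b)

def conj : ∀ n, Q n → Q n
  | 0, x => x
  | n+1, (x, false) => (conj n x, false)
  | n+1, (x, true) => (neg n x, true)

/-- Cayley-Dickson doubling multiplication restricted to the loop:
`(x,0)(y,0) = (xy,0)`, `(x,0)(y,1) = (yx,1)`, `(x,1)(y,0) = (xy*,1)`, `(x,1)(y,1) = (-y*x,0)`. -/
def mul : ∀ n, Q n → Q n → Q n
  | 0, x, y => xor x y
  | n+1, (x, false), (y, false) => (mul n x y, false)
  | n+1, (x, false), (y, true)  => (mul n y x, true)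
  | n+1, (x, true),  (y, false) => (mul n x (conj n y), true)
  | n+1, (x, true),  (y, true)  => (neg n (mul n (conj n y) x), false)

instance (n : ℕ) : One (Q n) := ⟨one n⟩
instance (n : ℕ) : Neg (Q n) := ⟨neg n⟩
instance (n : ℕ) : Mul (Q n) := ⟨mul n⟩
instance (n : ℕ) : Star (Q n) := ⟨conj n⟩
/-- In `Q n` the inverse of `x` is its conjugate `x*`. -/
instance (n : ℕ) : Inv (Q n) := ⟨conj n⟩

instance instDecEq : ∀ n, DecidableEq (Q n)
  | 0 => inferInstanceAs (DecidableEq Bool)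
  | n+1 => letI := instDecEq n; inferInstanceAs (DecidableEq (Q n × Bool))

instance instFintype : ∀ n, Fintype (Q n)
  | 0 => inferInstanceAs (Fintype Bool)
  | n+1 => letI := instFintype n; inferInstanceAs (Fintype (Q n × Bool))

/-- Powers in `Q n` (well defined by diassociativity). -/
def pow {n : ℕ} (x : Q n) : ℕ → Q n
  | 0 => 1
  | k+1 => x * pow x k

/-- The embedding `x ↦ (x, 0)` of `Q n` into `Q (n+1)`. -/
def up {n : ℕ} (x : Q n) : Q (n+1) := (x, false)

/-- The map `x ↦ (x, 1)` from `Q n` into `Q (n+1)`. -/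
def up1 {n : ℕ} (x : Q n) : Q (n+1) := (x, true)

/-- The commutator `[x,y]`, defined by `xy = (yx)[x,y]`. -/
def comm {n : ℕ} (x y : Q n) : Q n := (y * x)⁻¹ * (x * y)

/-- The associator `[x,y,z]`, defined by `(xy)z = (x(yz))[x,y,z]`. -/
def assoc {n : ℕ} (x y z : Q n) : Q n := (x * (y * z))⁻¹ * ((x * y) * z)

/-- A subloop of the Cayley-Dickson loop `Q n`: a subset containing `1` and closed
under multiplication and inverses (= conjugates). -/
structure Subloop (n : ℕ) where
  carrier : Set (Q n)
  one_mem : (1 : Q n) ∈ carrier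
  mul_mem : ∀ ⦃x y : Q n⦄, x ∈ carrier → y ∈ carrier → x * y ∈ carrier
  inv_mem : ∀ ⦃x : Q n⦄, x ∈ carrier → x⁻¹ ∈ carrier

/-- The subloop of `Q n` generated by a set `s`. -/
def closure (n : ℕ) (s : Set (Q n)) : Set (Q n) :=
  ⋂₀ {t : Set (Q n) | s ⊆ t ∧ (1 : Q n) ∈ t ∧
      (∀ x ∈ t, ∀ y ∈ t, x * y ∈ t) ∧ (∀ x ∈ t, x⁻¹ ∈ t)}

end Q

/-!
Forgetting signs maps `Q n` onto the elementary abelian 2-group `(ZMod 2)ⁿ`: the map records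
the second coordinates of the iterated pairs, it turns products into sums because every case
of the doubling formula adds those coordinates, and its fibres are exactly the pairs `{x, -x}`.
Associativity of `(ZMod 2)ⁿ` therefore gives `(xy)z = ±x(yz)`, and since `x⁻¹ = x*` satisfies
`x* x = 1` and signs pull out of products, the associator `(x(yz))* ((xy)z)` is `±1`.
-/

namespace Q

theorem neg_neg : ∀ n (x : Q n), neg n (neg n x) = x
  | 0, x => Bool.not_not x
  | n+1, (x, _) => by rw [neg, neg, neg_neg n x]

theorem conj_neg : ∀ n (x : Q n), conj n (neg n x) = neg n (conj n x)
  | 0, _ => rfl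
  | n+1, (x, false) => by rw [neg, conj, conj, conj_neg n x, neg]
  | n+1, (_, true) => rfl

theorem conj_one : ∀ n, conj n (one n) = one n
  | 0 => rfl
  | n+1 => by rw [one, conj, conj_one n]

mutual

theorem mul_neg : ∀ n (x y : Q n), mul n x (neg n y) = neg n (mul n x y)
  | 0, x, y => Bool.xor_not x y
  | n+1, (x, false), (y, false) => by rw [neg, mul, mul, mul_neg n x y, neg]
  | n+1, (x, false), (y, true) => by rw [neg, mul, mul, neg_mul n y x, neg]
  | n+1, (x, true), (y, false) => by rw [neg, mul, mul, conj_neg, mul_neg n x, neg]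
  | n+1, (x, true), (y, true) => by rw [neg, mul, mul, conj_neg, neg_mul n, neg]

theorem neg_mul : ∀ n (x y : Q n), mul n (neg n x) y = neg n (mul n x y)
  | 0, x, y => Bool.not_xor x y
  | n+1, (x, false), (y, false) => by rw [neg, mul, mul, neg_mul n x y, neg]
  | n+1, (x, false), (y, true) => by rw [neg, mul, mul, mul_neg n y x, neg]
  | n+1, (x, true), (y, false) => by rw [neg, mul, mul, neg_mul n x, neg]
  | n+1, (x, true), (y, true) => by rw [neg, mul, mul, mul_neg n, neg]

end

theorem mul_one : ∀ n (x : Q n), mul n x (one n) = x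
  | 0, x => Bool.xor_false x
  | n+1, (x, false) => by rw [one, mul, mul_one n x]
  | n+1, (x, true) => by rw [one, mul, conj_one, mul_one n x]

theorem conj_mul_self : ∀ n (x : Q n), mul n (conj n x) x = one n
  | 0, x => Bool.xor_self x
  | n+1, (x, false) => by rw [conj, mul, conj_mul_self n x, one]
  | n+1, (x, true) => by rw [conj, mul, mul_neg, neg_neg, conj_mul_self n x, one]

/-- `Bool` plays the role of `ZMod 2` here, its addition being `xor`. -/
def modSign : ∀ n, Q n → (Fin n → Bool)
  | 0, _ => 0
  | n+1, (x, b) => Matrix.vecCons b (modSign n x)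

theorem modSign_neg : ∀ n (x : Q n), modSign n (neg n x) = modSign n x
  | 0, _ => rfl
  | n+1, (x, _) => by rw [neg, modSign, modSign, modSign_neg n x]

theorem modSign_conj : ∀ n (x : Q n), modSign n (conj n x) = modSign n x
  | 0, _ => rfl
  | n+1, (x, false) => by rw [conj, modSign, modSign, modSign_conj n x]
  | n+1, (x, true) => by rw [conj, modSign, modSign, modSign_neg n x]

theorem modSign_mul : ∀ n (x y : Q n), modSign n (mul n x y) = modSign n x + modSign n y
  | 0, _, _ => rfl
  | n+1, (x, a), (y, b) => by
    rw [modSign, modSign, Matrix.cons_add_cons]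
    cases a <;> cases b <;>
      simp only [mul, modSign, modSign_mul, modSign_neg, modSign_conj, add_comm] <;> rfl

theorem eq_or_eq_neg_of_modSign_eq : ∀ n {x y : Q n}, modSign n x = modSign n y →
    x = y ∨ x = neg n y
  | 0, x, y, _ => Bool.eq_or_eq_not x y
  | n+1, (x, a), (y, b), h => by
    rw [modSign, modSign] at h
    obtain ⟨rfl, hx⟩ := Fin.cons_inj.mp h
    rcases eq_or_eq_neg_of_modSign_eq n hx with rfl | rfl
    exacts [Or.inl rfl, Or.inr rfl]

theorem mul_assoc_or_neg {n : ℕ} (x y z : Q n) :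
    (x * y) * z = x * (y * z) ∨ (x * y) * z = -(x * (y * z)) :=
  eq_or_eq_neg_of_modSign_eq n <| by
    change modSign n (mul n (mul n x y) z) = modSign n (mul n x (mul n y z))
    rw [modSign_mul, modSign_mul, modSign_mul, modSign_mul, add_assoc]

end Q

/-- For any elements `x, y, z` of a Cayley-Dickson loop `Q n`, the associator `[x,y,z]`,
defined by `(xy)z = (x(yz))·[x,y,z]`, equals `1` or `-1`. -/
theorem Q.assoc_eq_one_or_neg_one (n : ℕ) (x y z : Q n) :
    (x * y) * z = (x * (y * z)) * Q.assoc x y z ∧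
    (Q.assoc x y z = 1 ∨ Q.assoc x y z = -1) := by
  have h_one : ∀ w : Q n, w * 1 = w := Q.mul_one n
  have h_inv : ∀ w : Q n, w⁻¹ * w = 1 := Q.conj_mul_self n
  have h_neg : ∀ v w : Q n, v * -w = -(v * w) := Q.mul_neg n
  unfold Q.assoc
  rcases Q.mul_assoc_or_neg x y z with h | h <;> rw [h]
  · simp only [h_inv, h_one, true_or, and_self]
  · simp only [h_neg, h_inv, h_one, or_true, and_self]
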